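/- arXiv:1702.07250 — 2 statements merged into one kernel-verified Lean document; each statement's English description precedes it below -/
import Mathlib

section
/- Let (𝒜⁽ⁿ⁾, τ⁽ⁿ⁾) for n ∈ ℕ and (𝒜, τ) be unital C*-algebras equipped with faithful tracial states, let x⁽ⁿ⁾ = (x₁⁽ⁿ⁾, …, x_m⁽ⁿ⁾) be a tuple in 𝒜⁽ⁿ⁾ for each n, and let x = (x₁, …, x_m) be a tuple in 𝒜 such that x⁽ⁿ⁾ strongly converges to x. Let r be a rational expression in 2m variables such that (x, x*) lies in the domain of r in 𝒜. Then lim_{n→∞} τ⁽ⁿ⁾(r(x⁽ⁿ⁾, (x⁽ⁿ⁾)*)) = τ(r(x, x*)) (the evaluations r(x⁽ⁿ⁾, (x⁽ⁿ⁾)*) being defined for all sufficiently large n). -/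
open Filter Topology

/-- A non-commutative rational expression in variables indexed by `σ`:
the inductive syntax generated by complex scalars and formal variables,
closed under addition, multiplication and formal inverse. -/
inductive RatExpr (σ : Type*) : Type _
  | scalar : ℂ → RatExpr σ
  | var : σ → RatExpr σ
  | add : RatExpr σ → RatExpr σ → RatExpr σ
  | mul : RatExpr σ → RatExpr σ → RatExpr σ
  | inv : RatExpr σ → RatExpr σ

open Classical in
/-- Partial evaluation of a rational expression at a tuple `a` in a unital complex
algebra.  A formal inverse evaluates exactly when its operand evaluates to an
invertible element, and then its value is that inverse. -/
noncomputable def RatExpr.eval? {σ : Type*} {B : Type*} [Ring B] [Algebra ℂ B]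
    (a : σ → B) : RatExpr σ → Option B
  | .scalar c => some (algebraMap ℂ B c)
  | .var i => some (a i)
  | .add r s => do return (← r.eval? a) + (← s.eval? a)
  | .mul r s => do return (← r.eval? a) * (← s.eval? a)
  | .inv r => (r.eval? a).bind fun b => if IsUnit b then some (Ring.inverse b) else none

/-- `a` lies in the domain of the rational expression `r`. -/
def RatExpr.InDomain {σ : Type*} {B : Type*} [Ring B] [Algebra ℂ B]
    (r : RatExpr σ) (a : σ → B) : Prop := (r.eval? a).isSome

/-- The evaluation of a rational expression (defaulting to `0` off the domain). -/
noncomputable def RatExpr.eval {σ : Type*} {B : Type*} [Ring B] [Algebra ℂ B]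
    (r : RatExpr σ) (a : σ → B) : B := (r.eval? a).getD 0

/-- The tuple `(x₁, …, x_m, x₁*, …, x_m*)` built from the `m`-tuple `x`. -/
def starTuple {m : ℕ} {A : Type*} [Star A] (x : Fin m → A) : (Fin m ⊕ Fin m) → A :=
  Sum.elim x (fun i => star (x i))

/-- `τ` is a faithful tracial state on the unital C⋆-algebra `A`:
a linear functional with `τ 1 = 1`, `τ (a* a) ≥ 0`, `τ (a b) = τ (b a)`, and
`τ (a* a) = 0 → a = 0`. -/
structure IsFaithfulTracialState (A : Type*) [CStarAlgebra A] (τ : A → ℂ) : Prop where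
  map_add : ∀ a b, τ (a + b) = τ a + τ b
  map_smul : ∀ (c : ℂ) a, τ (c • a) = c * τ a
  map_one : τ 1 = 1
  nonneg_re : ∀ a, 0 ≤ (τ (star a * a)).re
  im_eq_zero : ∀ a, (τ (star a * a)).im = 0
  tracial : ∀ a b, τ (a * b) = τ (b * a)
  faithful : ∀ a, τ (star a * a) = 0 → a = 0

/-- Strong convergence of a sequence of `m`-tuples `x n` in C⋆-probability spaces
`(A n, τ' n)` to the tuple `y` in `(B, τ)`: convergence in trace and in norm of all
noncommutative `*`-polynomials, i.e. of all elements of the free algebra on `2m`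
generators evaluated at `(x, x*)` resp. `(y, y*)`. -/
def StronglyConverges {m : ℕ} {A : ℕ → Type*} [∀ n, CStarAlgebra (A n)]
    {B : Type*} [CStarAlgebra B]
    (τ' : ∀ n, A n → ℂ) (τ : B → ℂ)
    (x : ∀ n, Fin m → A n) (y : Fin m → B) : Prop :=
  ∀ p : FreeAlgebra ℂ (Fin m ⊕ Fin m),
    Tendsto (fun n => τ' n (FreeAlgebra.lift ℂ (starTuple (x n)) p)) atTop
      (𝓝 (τ (FreeAlgebra.lift ℂ (starTuple y) p))) ∧
    Tendsto (fun n => ‖FreeAlgebra.lift ℂ (starTuple (x n)) p‖) atTop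
      (𝓝 ‖FreeAlgebra.lift ℂ (starTuple y) p‖)

/-!
Call a sequence `uₙ` together with a limit `v` polynomially approximable if for every `ε > 0`
a single noncommutative polynomial `p` satisfies `‖p(y) - v‖ ≤ ε` and `‖p(xₙ) - uₙ‖ ≤ ε` for all
large `n`. Since the norms of polynomials converge, such pairs are closed under sums and products.
They are also closed under inverses: by spectral permanence `v⁻¹` lies in the C⋆-algebra
generated by `y`, so some polynomial `q` nearly inverts `v` on both sides, hence (norm
convergence again) nearly inverts `uₙ` on both sides for large `n`; this forces `uₙ` to be
invertible with `uₙ⁻¹` close to `q(xₙ)`. Thus `r(xₙ, xₙ*)` is eventually defined and approximable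
by polynomials, and as states are uniformly Lipschitz, trace convergence passes from polynomials
to `r`.
-/

theorem isUnit_of_isUnit_mul_of_isUnit_mul {M : Type*} [Monoid M] {a u : M}
    (hau : IsUnit (a * u)) (hua : IsUnit (u * a)) : IsUnit a := by
  have hleft : (↑hua.unit⁻¹ * u) * a = 1 := by rw [mul_assoc]; exact hua.val_inv_mul
  have hright : a * (u * ↑hau.unit⁻¹) = 1 := by rw [← mul_assoc]; exact hau.mul_val_inv
  exact ⟨⟨a, _, hright, left_inv_eq_right_inv hleft hright ▸ hleft⟩, rfl⟩

theorem isUnit_and_norm_inverse_sub_le {R : Type*} [NormedRing R] [HasSummableGeomSeries R]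
    {a u : R} {δ : ℝ} (hδ : δ ≤ 1 / 2) (hau : ‖a * u - 1‖ ≤ δ) (hua : ‖u * a - 1‖ ≤ δ) :
    IsUnit a ∧ ‖Ring.inverse a - u‖ ≤ 2 * δ * ‖u‖ := by
  have unit_of_near_one {c : R} (hc : ‖c - 1‖ ≤ δ) : IsUnit c := by
    simpa using isUnit_one_sub_of_norm_lt_one (x := 1 - c) (by rw [norm_sub_rev]; linarith)
  have ha : IsUnit a :=
    isUnit_of_isUnit_mul_of_isUnit_mul (unit_of_near_one hau) (unit_of_near_one hua)
  refine ⟨ha, ?_⟩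
  have key : Ring.inverse a - u = Ring.inverse a * (1 - a * u) := by
    rw [mul_sub, mul_one, ← mul_assoc, Ring.inverse_mul_cancel a ha, one_mul]
  have hle : ‖Ring.inverse a - u‖ ≤ (‖Ring.inverse a - u‖ + ‖u‖) * δ :=
    calc ‖Ring.inverse a - u‖ ≤ ‖Ring.inverse a‖ * ‖1 - a * u‖ := key ▸ norm_mul_le _ _
      _ ≤ (‖Ring.inverse a - u‖ + ‖u‖) * δ := by
        gcongr
        · exact norm_le_norm_sub_add _ _
        · rwa [norm_sub_rev]
  nlinarith [norm_nonneg (Ring.inverse a - u), norm_nonneg u]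

theorem norm_mul_sub_mul_le {R : Type*} [NonUnitalSeminormedRing R] (a b c d : R) :
    ‖a * b - c * d‖ ≤ ‖a - c‖ * ‖b‖ + ‖c‖ * ‖b - d‖ := by
  rw [show a * b - c * d = (a - c) * b + c * (b - d) by noncomm_ring]
  exact (norm_add_le _ _).trans (add_le_add (norm_mul_le _ _) (norm_mul_le _ _))

open scoped ComplexOrder

theorem PositiveLinearMap.norm_apply_le_four_mul {R S : Type*} [CStarAlgebra R] [PartialOrder R]
    [StarOrderedRing R] [CStarAlgebra S] [PartialOrder S] [StarOrderedRing S] (f : R →ₚ[ℂ] S)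
    (a : R) : ‖f a‖ ≤ 4 * ‖f 1‖ * ‖a‖ := by
  obtain ⟨y, hy_nonneg, hy_norm, hy⟩ := CStarAlgebra.exists_sum_four_nonneg a
  calc ‖f a‖ ≤ ∑ i : Fin 4, ‖f (y i)‖ := by
        conv_lhs => rw [hy]
        simp only [map_sum, map_smul]
        refine (norm_sum_le _ _).trans (le_of_eq ?_)
        simp [norm_smul]
    _ ≤ ∑ _i : Fin 4, ‖f 1‖ * ‖a‖ := by
        gcongr with i
        exact (f.norm_apply_le_of_nonneg _ (hy_nonneg i)).trans (by gcongr; exact hy_norm i)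
    _ = 4 * ‖f 1‖ * ‖a‖ := by simp [mul_assoc]

namespace IsFaithfulTracialState

variable {R : Type*} [CStarAlgebra R] {τ : R → ℂ}

noncomputable def toPositiveLinearMap [PartialOrder R] [StarOrderedRing R]
    (hτ : IsFaithfulTracialState R τ) : R →ₚ[ℂ] ℂ :=
  .mk₀ ⟨⟨τ, hτ.map_add⟩, hτ.map_smul⟩ fun x hx => by
    obtain ⟨s, rfl⟩ := (CStarAlgebra.nonneg_iff_eq_star_mul_self).mp hx
    exact Complex.nonneg_iff.mpr ⟨hτ.nonneg_re s, (hτ.im_eq_zero s).symm⟩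

theorem coe_toPositiveLinearMap [PartialOrder R] [StarOrderedRing R]
    (hτ : IsFaithfulTracialState R τ) : ⇑hτ.toPositiveLinearMap = τ := rfl

theorem lipschitzWith (hτ : IsFaithfulTracialState R τ) : LipschitzWith 4 τ := by
  let := CStarAlgebra.spectralOrder R
  let := CStarAlgebra.spectralOrderedRing R
  refine LipschitzWith.of_dist_le_mul fun a b => ?_
  have h := hτ.toPositiveLinearMap.norm_apply_le_four_mul (a - b)
  rw [map_sub, coe_toPositiveLinearMap, hτ.map_one, norm_one, mul_one] at h
  rwa [dist_eq_norm, dist_eq_norm]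

end IsFaithfulTracialState

theorem StarSubalgebra.ring_inverse_mem {R : Type*} [CStarAlgebra R] (S : StarSubalgebra ℂ R)
    [IsClosed (S : Set R)] {c : R} (hc : c ∈ S) (hu : IsUnit c) : Ring.inverse c ∈ S := by
  obtain ⟨w, hw⟩ := (S.coe_isUnit (a := ⟨c, hc⟩)).mp hu
  have hc' : c = (Units.map (S.subtype : S →* R) w : R) := by simp [hw]
  rw [hc', Ring.inverse_unit, Units.coe_map_inv]
  exact (↑w⁻¹ : S).property

theorem range_lift_starTuple {m : ℕ} {R : Type*} [Ring R] [StarRing R] [Algebra ℂ R]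
    [StarModule ℂ R] (y : Fin m → R) :
    Set.range (FreeAlgebra.lift ℂ (starTuple y)) = StarAlgebra.adjoin ℂ (Set.range y) := by
  rw [← AlgHom.coe_range, ← Algebra.adjoin_range_eq_range_freeAlgebra_lift, starTuple,
    Set.Sum.elim_range, ← StarSubalgebra.coe_toSubalgebra, StarAlgebra.adjoin_toSubalgebra,
    ← Set.image_star, ← Set.range_comp]
  rfl

theorem ring_inverse_mem_closure_range_lift_starTuple {m : ℕ} {R : Type*} [CStarAlgebra R]
    (y : Fin m → R) {c : R} (hc : c ∈ closure (Set.range (FreeAlgebra.lift ℂ (starTuple y))))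
    (hu : IsUnit c) : Ring.inverse c ∈ closure (Set.range (FreeAlgebra.lift ℂ (starTuple y))) := by
  rw [range_lift_starTuple, ← StarSubalgebra.topologicalClosure_coe] at hc ⊢
  have := (StarAlgebra.adjoin ℂ (Set.range y)).isClosed_topologicalClosure
  exact StarSubalgebra.ring_inverse_mem _ hc hu

namespace RatExpr

variable {σ B : Type*} [Ring B] [Algebra ℂ B] {a : σ → B} {r s : RatExpr σ}

theorem eval?_eq_some_eval (hr : r.InDomain a) : r.eval? a = some (r.eval a) := by
  rw [eval, Option.getD_of_ne_none]
  simpa [InDomain, Option.isSome_iff_ne_none] using hr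

theorem inDomain_add : (add r s).InDomain a ↔ r.InDomain a ∧ s.InDomain a := by
  simp only [InDomain, eval?]
  cases r.eval? a <;> cases s.eval? a <;> simp

theorem inDomain_mul : (mul r s).InDomain a ↔ r.InDomain a ∧ s.InDomain a := by
  simp only [InDomain, eval?]
  cases r.eval? a <;> cases s.eval? a <;> simp

theorem inDomain_inv : (inv r).InDomain a ↔ r.InDomain a ∧ IsUnit (r.eval a) := by
  simp only [InDomain, eval, eval?]
  cases r.eval? a <;> simp [apply_ite]

theorem eval_scalar (c : ℂ) : (scalar c : RatExpr σ).eval a = algebraMap ℂ B c := rfl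

theorem eval_var (i : σ) : (var i).eval a = a i := rfl

theorem eval_add (hr : r.InDomain a) (hs : s.InDomain a) :
    (add r s).eval a = r.eval a + s.eval a := by
  rw [eval, eval?, eval?_eq_some_eval hr, eval?_eq_some_eval hs]; rfl

theorem eval_mul (hr : r.InDomain a) (hs : s.InDomain a) :
    (mul r s).eval a = r.eval a * s.eval a := by
  rw [eval, eval?, eval?_eq_some_eval hr, eval?_eq_some_eval hs]; rfl

theorem eval_inv : (inv r).eval a = Ring.inverse (r.eval a) := by
  simp only [eval, eval?]
  cases r.eval? a with
  | none => simp
  | some c => by_cases hc : IsUnit c <;> simp [hc]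

end RatExpr

section PolyApproximable

variable {σ : Type*} {A : ℕ → Type*} [∀ n, NormedRing (A n)] [∀ n, NormedAlgebra ℂ (A n)]
  {B : Type*} [NormedRing B] [NormedAlgebra ℂ B]

def IsPolyApproximable (a : ∀ n, σ → A n) (b : σ → B) (u : ∀ n, A n) (v : B) : Prop :=
  ∀ ε > 0, ∃ p : FreeAlgebra ℂ σ, ‖FreeAlgebra.lift ℂ b p - v‖ ≤ ε ∧
    ∀ᶠ n in atTop, ‖FreeAlgebra.lift ℂ (a n) p - u n‖ ≤ ε

def PolyNormsTendsto (a : ∀ n, σ → A n) (b : σ → B) : Prop :=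
  ∀ p : FreeAlgebra ℂ σ, Tendsto (fun n => ‖FreeAlgebra.lift ℂ (a n) p‖) atTop
    (𝓝 ‖FreeAlgebra.lift ℂ b p‖)

variable {a : ∀ n, σ → A n} {b : σ → B} {u u' : ∀ n, A n} {v v' : B}

theorem isPolyApproximable_lift (p : FreeAlgebra ℂ σ) :
    IsPolyApproximable a b (fun n => FreeAlgebra.lift ℂ (a n) p) (FreeAlgebra.lift ℂ b p) :=
  fun ε hε => ⟨p, by simpa using hε.le, .of_forall fun n => by simpa using hε.le⟩

namespace IsPolyApproximable

theorem congr (h : IsPolyApproximable a b u v) (huu' : ∀ᶠ n in atTop, u n = u' n) :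
    IsPolyApproximable a b u' v := fun ε hε =>
  let ⟨p, hpb, hpa⟩ := h ε hε
  ⟨p, hpb, by filter_upwards [hpa, huu'] with n hn hn'; rwa [← hn']⟩

theorem mem_closure (h : IsPolyApproximable a b u v) :
    v ∈ closure (Set.range (FreeAlgebra.lift ℂ b)) :=
  Metric.mem_closure_iff.mpr fun ε hε =>
    let ⟨p, hp, _⟩ := h (ε / 2) (half_pos hε)
    ⟨_, ⟨p, rfl⟩, by rw [dist_comm, dist_eq_norm]; linarith⟩

theorem eventually_norm_sub_le (hN : PolyNormsTendsto a b) (h : IsPolyApproximable a b u v)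
    (q : FreeAlgebra ℂ σ) {ε : ℝ} (hε : 0 < ε) :
    ∀ᶠ n in atTop, ‖u n - FreeAlgebra.lift ℂ (a n) q‖ ≤ ‖v - FreeAlgebra.lift ℂ b q‖ + ε := by
  obtain ⟨p, hpb, hpa⟩ := h (ε / 3) (by positivity)
  have hlim := (hN (p - q)).eventually (eventually_le_nhds (lt_add_of_pos_right _
    (show 0 < ε / 3 by positivity)))
  filter_upwards [hpa, hlim] with n hpa hlim
  simp only [map_sub] at hlim
  calc ‖u n - FreeAlgebra.lift ℂ (a n) q‖
      ≤ ‖u n - FreeAlgebra.lift ℂ (a n) p‖ +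
          ‖FreeAlgebra.lift ℂ (a n) p - FreeAlgebra.lift ℂ (a n) q‖ :=
        norm_sub_le_norm_sub_add_norm_sub _ _ _
    _ ≤ ε / 3 + (‖FreeAlgebra.lift ℂ b p - FreeAlgebra.lift ℂ b q‖ + ε / 3) := by
        rw [norm_sub_rev]; exact add_le_add hpa hlim
    _ ≤ ε / 3 + ((‖FreeAlgebra.lift ℂ b p - v‖ + ‖v - FreeAlgebra.lift ℂ b q‖) + ε / 3) := by
        gcongr; exact norm_sub_le_norm_sub_add_norm_sub _ _ _
    _ ≤ ‖v - FreeAlgebra.lift ℂ b q‖ + ε := by linarith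

theorem eventually_norm_le (hN : PolyNormsTendsto a b) (h : IsPolyApproximable a b u v)
    {ε : ℝ} (hε : 0 < ε) : ∀ᶠ n in atTop, ‖u n‖ ≤ ‖v‖ + ε := by
  simpa using h.eventually_norm_sub_le hN 0 hε

theorem add (h : IsPolyApproximable a b u v) (h' : IsPolyApproximable a b u' v') :
    IsPolyApproximable a b (u + u') (v + v') := by
  intro ε hε
  obtain ⟨p, hpb, hpa⟩ := h (ε / 2) (half_pos hε)
  obtain ⟨p', hpb', hpa'⟩ := h' (ε / 2) (half_pos hε)
  refine ⟨p + p', ?_, ?_⟩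
  · rw [map_add, add_sub_add_comm]
    linarith [norm_add_le (FreeAlgebra.lift ℂ b p - v) (FreeAlgebra.lift ℂ b p' - v')]
  · filter_upwards [hpa, hpa'] with n hn hn'
    rw [map_add, Pi.add_apply, add_sub_add_comm]
    linarith [norm_add_le (FreeAlgebra.lift ℂ (a n) p - u n) (FreeAlgebra.lift ℂ (a n) p' - u' n)]

theorem mul (hN : PolyNormsTendsto a b) (h : IsPolyApproximable a b u v)
    (h' : IsPolyApproximable a b u' v') : IsPolyApproximable a b (u * u') (v * v') := by
  intro ε hε
  set C := ‖v‖ + ‖v'‖ + 3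
  set δ := min 1 (ε / C)
  have hδ : 0 < δ := lt_min one_pos (by positivity)
  have hδC : δ * C ≤ ε := (mul_le_mul_of_nonneg_right (min_le_right _ _) (by positivity)).trans
    (div_mul_cancel₀ ε (by positivity)).le
  obtain ⟨p, hpb, hpa⟩ := h δ hδ
  obtain ⟨p', hpb', hpa'⟩ := h' δ hδ
  have hδ1 : δ ≤ 1 := min_le_left _ _
  have hp' : ‖FreeAlgebra.lift ℂ b p'‖ ≤ ‖v'‖ + 1 := by
    linarith [norm_le_norm_add_norm_sub' (FreeAlgebra.lift ℂ b p') v']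
  refine ⟨p * p', ?_, ?_⟩
  · rw [map_mul]
    refine (norm_mul_sub_mul_le _ _ _ _).trans ?_
    nlinarith [norm_nonneg v, norm_nonneg (FreeAlgebra.lift ℂ b p')]
  · filter_upwards [hpa, hpa', h.eventually_norm_le hN one_pos,
      (isPolyApproximable_lift p').eventually_norm_le hN one_pos] with n hn hn' hu hp'
    rw [map_mul, Pi.mul_apply]
    refine (norm_mul_sub_mul_le _ _ _ _).trans ?_
    nlinarith [norm_nonneg (u n), norm_nonneg (FreeAlgebra.lift ℂ (a n) p')]

theorem exists_near_inverse [∀ n, CompleteSpace (A n)] (hN : PolyNormsTendsto a b)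
    (h : IsPolyApproximable a b u v) (hv : IsUnit v)
    (hw : Ring.inverse v ∈ closure (Set.range (FreeAlgebra.lift ℂ b)))
    {ε : ℝ} (hε : 0 < ε) (hε1 : ε ≤ 1) :
    ∃ q : FreeAlgebra ℂ σ, ‖FreeAlgebra.lift ℂ b q - Ring.inverse v‖ ≤ ε ∧
      ∀ᶠ n in atTop, IsUnit (u n) ∧
        ‖FreeAlgebra.lift ℂ (a n) q - Ring.inverse (u n)‖ ≤ ε := by
  set w := Ring.inverse v
  set C := ‖v‖ + 1
  set K := ‖w‖ + 2
  -- `C * η` will bound `‖uₙ q(xₙ) - 1‖` and `‖q(xₙ) uₙ - 1‖`, and `K` bounds `‖q(xₙ)‖`.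
  set η := ε / (4 * C * K)
  have hCK : 0 < 4 * C * K := by positivity
  have hη : 0 < η := by positivity
  have hηCK : η * (4 * C * K) = ε := div_mul_cancel₀ ε hCK.ne'
  obtain ⟨_, ⟨q, rfl⟩, hq⟩ := Metric.mem_closure_iff.mp hw η hη
  rw [dist_eq_norm, norm_sub_rev] at hq
  set qb := FreeAlgebra.lift ℂ b q
  have hvq : ‖v * qb - 1‖ ≤ ‖v‖ * η := by
    rw [← Ring.mul_inverse_cancel v hv, ← mul_sub]
    exact (norm_mul_le _ _).trans (by gcongr)
  have hqv : ‖qb * v - 1‖ ≤ η * ‖v‖ := by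
    rw [← Ring.inverse_mul_cancel v hv, ← sub_mul]
    exact (norm_mul_le _ _).trans (by gcongr)
  have hqb : ‖qb‖ ≤ ‖w‖ + η := by linarith [norm_le_norm_add_norm_sub' qb w]
  have hC : 1 ≤ C := le_add_of_nonneg_left (norm_nonneg v)
  have hK : 2 ≤ K := le_add_of_nonneg_left (norm_nonneg w)
  have hCK8 : 8 ≤ 4 * C * K := by nlinarith
  have hηε : η ≤ ε := by nlinarith
  refine ⟨q, by linarith, ?_⟩
  have hq := isPolyApproximable_lift (a := a) (b := b) q
  filter_upwards [(h.mul hN hq).eventually_norm_sub_le hN 1 hη,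
    (hq.mul hN h).eventually_norm_sub_le hN 1 hη, hq.eventually_norm_le hN one_pos]
    with n huq hqu hqn
  simp only [Pi.mul_apply, map_one] at huq hqu
  obtain ⟨hun, hinv⟩ := isUnit_and_norm_inverse_sub_le (δ := C * η) (by nlinarith)
    (huq.trans (by linarith)) (hqu.trans (by linarith))
  refine ⟨hun, ?_⟩
  rw [norm_sub_rev]
  nlinarith

theorem inverse [∀ n, CompleteSpace (A n)] (hN : PolyNormsTendsto a b)
    (h : IsPolyApproximable a b u v) (hv : IsUnit v)
    (hw : Ring.inverse v ∈ closure (Set.range (FreeAlgebra.lift ℂ b))) :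
    (∀ᶠ n in atTop, IsUnit (u n)) ∧
      IsPolyApproximable a b (fun n => Ring.inverse (u n)) (Ring.inverse v) := by
  refine ⟨?_, fun ε hε => ?_⟩
  · obtain ⟨_, _, hq⟩ := h.exists_near_inverse hN hv hw one_pos le_rfl
    exact hq.mono fun n hn => hn.1
  · obtain ⟨q, hqb, hqa⟩ := h.exists_near_inverse hN hv hw (lt_min hε one_pos) (min_le_right _ _)
    exact ⟨q, hqb.trans (min_le_left _ _), hqa.mono fun n hn => hn.2.trans (min_le_left _ _)⟩

theorem tendsto_apply {E : Type*} [PseudoMetricSpace E] {φ : ∀ n, A n → E} {ψ : B → E}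
    {K : NNReal} (h : IsPolyApproximable a b u v) (hφ : ∀ n, LipschitzWith K (φ n))
    (hψ : LipschitzWith K ψ)
    (hconv : ∀ p : FreeAlgebra ℂ σ, Tendsto (fun n => φ n (FreeAlgebra.lift ℂ (a n) p)) atTop
      (𝓝 (ψ (FreeAlgebra.lift ℂ b p)))) :
    Tendsto (fun n => φ n (u n)) atTop (𝓝 (ψ v)) := by
  refine Metric.tendsto_nhds.mpr fun ε hε => ?_
  set η := ε / (4 * (K + 1)) with hη_def
  have hη : 0 < η := by positivity
  have hKη : K * η ≤ ε / 4 :=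
    calc (K : ℝ) * η = ε / 4 * (K / (K + 1)) := by rw [hη_def]; field_simp
      _ ≤ ε / 4 * 1 := by gcongr; exact (div_le_one (by positivity)).mpr (by linarith)
      _ = ε / 4 := mul_one _
  obtain ⟨p, hpb, hpa⟩ := h η hη
  filter_upwards [hpa, Metric.tendsto_nhds.mp (hconv p) (ε / 3) (by positivity)] with n hpa hlim
  calc dist (φ n (u n)) (ψ v)
      ≤ dist (φ n (u n)) (φ n (FreeAlgebra.lift ℂ (a n) p)) +
          dist (φ n (FreeAlgebra.lift ℂ (a n) p)) (ψ (FreeAlgebra.lift ℂ b p)) +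
          dist (ψ (FreeAlgebra.lift ℂ b p)) (ψ v) := dist_triangle4 _ _ _ _
    _ ≤ K * η + ε / 3 + K * η := by
        refine add_le_add (add_le_add ?_ hlim.le) ?_
        · exact ((hφ n).dist_le_mul _ _).trans (by rw [dist_eq_norm']; gcongr)
        · exact (hψ.dist_le_mul _ _).trans (by rw [dist_eq_norm]; gcongr)
    _ < ε := by linarith

end IsPolyApproximable

theorem RatExpr.eventually_inDomain_and_isPolyApproximable [∀ n, CompleteSpace (A n)]
    (hN : PolyNormsTendsto a b)
    (hinv : ∀ c ∈ closure (Set.range (FreeAlgebra.lift ℂ b)), IsUnit c →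
      Ring.inverse c ∈ closure (Set.range (FreeAlgebra.lift ℂ b)))
    (r : RatExpr σ) (hr : r.InDomain b) :
    (∀ᶠ n in atTop, r.InDomain (a n)) ∧
      IsPolyApproximable a b (fun n => r.eval (a n)) (r.eval b) := by
  induction r with
  | scalar c =>
    refine ⟨.of_forall fun _ => rfl, ?_⟩
    simpa only [RatExpr.eval_scalar, AlgHom.commutes] using
      isPolyApproximable_lift (a := a) (b := b) (algebraMap ℂ _ c)
  | var i =>
    refine ⟨.of_forall fun _ => rfl, ?_⟩
    simpa only [RatExpr.eval_var, FreeAlgebra.lift_ι_apply] using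
      isPolyApproximable_lift (a := a) (b := b) (FreeAlgebra.ι ℂ i)
  | add r s ihr ihs =>
    obtain ⟨hr, hs⟩ := RatExpr.inDomain_add.mp hr
    obtain ⟨hr', hra⟩ := ihr hr
    obtain ⟨hs', hsa⟩ := ihs hs
    refine ⟨by filter_upwards [hr', hs'] with n h1 h2 using RatExpr.inDomain_add.mpr ⟨h1, h2⟩, ?_⟩
    rw [RatExpr.eval_add hr hs]
    exact (hra.add hsa).congr <| by
      filter_upwards [hr', hs'] with n h1 h2 using (RatExpr.eval_add h1 h2).symm
  | mul r s ihr ihs =>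
    obtain ⟨hr, hs⟩ := RatExpr.inDomain_mul.mp hr
    obtain ⟨hr', hra⟩ := ihr hr
    obtain ⟨hs', hsa⟩ := ihs hs
    refine ⟨by filter_upwards [hr', hs'] with n h1 h2 using RatExpr.inDomain_mul.mpr ⟨h1, h2⟩, ?_⟩
    rw [RatExpr.eval_mul hr hs]
    exact (hra.mul hN hsa).congr <| by
      filter_upwards [hr', hs'] with n h1 h2 using (RatExpr.eval_mul h1 h2).symm
  | inv r ih =>
    obtain ⟨hr, hu⟩ := RatExpr.inDomain_inv.mp hr
    obtain ⟨hr', hra⟩ := ih hr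
    obtain ⟨hun, hinva⟩ := hra.inverse hN hu (hinv _ hra.mem_closure hu)
    refine ⟨by filter_upwards [hr', hun] with n h1 h2 using RatExpr.inDomain_inv.mpr ⟨h1, h2⟩, ?_⟩
    simpa only [RatExpr.eval_inv] using hinva

end PolyApproximable

/-- If `x⁽ⁿ⁾` strongly converges to `x` and `(x, x*)` lies in the domain of the rational
expression `r`, then (the evaluations being defined for all sufficiently large `n`)
`τ⁽ⁿ⁾(r(x⁽ⁿ⁾, (x⁽ⁿ⁾)*)) → τ(r(x, x*))`. -/
theorem stmt4 {m : ℕ} {A : ℕ → Type*} [∀ n, CStarAlgebra (A n)]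
    {B : Type*} [CStarAlgebra B]
    (τ' : ∀ n, A n → ℂ) (τ : B → ℂ)
    (hτ' : ∀ n, IsFaithfulTracialState (A n) (τ' n)) (hτ : IsFaithfulTracialState B τ)
    (x : ∀ n, Fin m → A n) (y : Fin m → B)
    (hconv : StronglyConverges τ' τ x y)
    (r : RatExpr (Fin m ⊕ Fin m))
    (hdom : r.InDomain (starTuple y)) :
    (∀ᶠ n in atTop, r.InDomain (starTuple (x n))) ∧
    Tendsto (fun n => τ' n (r.eval (starTuple (x n)))) atTop (𝓝 (τ (r.eval (starTuple y)))) := by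
  have hN : PolyNormsTendsto (fun n => starTuple (x n)) (starTuple y) := fun p => (hconv p).2
  obtain ⟨hdom', happrox⟩ := r.eventually_inDomain_and_isPolyApproximable hN
    (fun _ hc hu => ring_inverse_mem_closure_range_lift_starTuple y hc hu) hdom
  exact ⟨hdom', happrox.tendsto_apply (fun n => (hτ' n).lipschitzWith) hτ.lipschitzWith
    fun p => (hconv p).1⟩
end

section
/- Let (𝒜⁽ⁿ⁾, τ⁽ⁿ⁾) for n ∈ ℕ and (𝒜, τ) be unital C*-algebras equipped with faithful tracial states. Let x⁽ⁿ⁾ ∈ 𝒜⁽ⁿ⁾ and x ∈ 𝒜 be self-adjoint elements such that for every polynomial p ∈ ℂ[X], lim_{n→∞} τ⁽ⁿ⁾(p(x⁽ⁿ⁾)) = τ(p(x)) and lim_{n→∞} ‖p(x⁽ⁿ⁾)‖ = ‖p(x)‖. Let δ > 0 and let f : ℝ → ℂ be a continuous function on the interval I = [−‖x‖ − δ, ‖x‖ + δ]. Then for all sufficiently large n the spectrum of x⁽ⁿ⁾ is contained in I (so that f(x⁽ⁿ⁾) is defined by the continuous functional calculus), and lim_{n→∞} ‖f(x⁽ⁿ⁾)‖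 = ‖f(x)‖ and lim_{n→∞} τ⁽ⁿ⁾(f(x⁽ⁿ⁾)) = τ(f(x)). -/
open Filter Topology

/-!
Polynomials are dense in `C([-‖x‖ - δ, ‖x‖ + δ], ℂ)`, and the continuous functional calculus is
isometric, so `f(y)` is uniformly approximated by `p(y)` for every self-adjoint `y` whose spectrum
lies in that interval; this holds for `x` and, since `‖x⁽ⁿ⁾‖ → ‖x‖`, eventually for `x⁽ⁿ⁾`.
Traces of states are bounded by a constant independent of the algebra, so both the norm and the
trace of `f(x⁽ⁿ⁾)` are uniform limits of quantities that converge by hypothesis.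
-/

theorem tendsto_of_forall_approx {ι α : Type*} [PseudoMetricSpace α] {l : Filter ι}
    {u : ι → α} {a : α}
    (h : ∀ ε > 0, ∃ v : ι → α, ∃ b, Tendsto v l (𝓝 b) ∧
      (∀ᶠ i in l, dist (v i) (u i) ≤ ε) ∧ dist b a ≤ ε) :
    Tendsto u l (𝓝 a) := by
  refine Metric.tendsto_nhds.2 fun ε hε => ?_
  obtain ⟨v, b, hv, hvu, hba⟩ := h (ε / 4) (by positivity)
  filter_upwards [hvu, Metric.tendsto_nhds.1 hv (ε / 4) (by positivity)] with i hvui hvi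
  calc dist (u i) a ≤ dist (u i) (v i) + dist (v i) b + dist b a := dist_triangle4 _ _ _ _
    _ < ε := by linarith [dist_comm (u i) (v i)]

section Polynomial

open Polynomial

theorem exists_complex_polynomial_near_of_continuousOn (a b : ℝ) (f : ℝ → ℂ)
    (hf : ContinuousOn f (Set.Icc a b)) (ε : ℝ) (hε : 0 < ε) :
    ∃ p : ℂ[X], ∀ t ∈ Set.Icc a b, ‖p.eval (t : ℂ) - f t‖ < ε := by
  obtain ⟨p, hp⟩ := exists_polynomial_near_of_continuousOn a b (fun t => (f t).re)
    (Complex.continuous_re.comp_continuousOn hf) (ε / 2) (by positivity)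
  obtain ⟨q, hq⟩ := exists_polynomial_near_of_continuousOn a b (fun t => (f t).im)
    (Complex.continuous_im.comp_continuousOn hf) (ε / 2) (by positivity)
  refine ⟨p.map (algebraMap ℝ ℂ) + C Complex.I * q.map (algebraMap ℝ ℂ), fun t ht => ?_⟩
  have heval (r : ℝ[X]) : (r.map (algebraMap ℝ ℂ)).eval (t : ℂ) = r.eval t := by
    rw [eval_map_algebraMap]; exact aeval_ofReal r t
  calc _ ≤ |p.eval t - (f t).re| + |q.eval t - (f t).im| := by
        refine (Complex.norm_le_abs_re_add_abs_im _).trans_eq ?_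
        simp [heval]
    _ < ε := by linarith [hp t ht, hq t ht]

theorem IsSelfAdjoint.norm_aeval_sub_cfc_le {A : Type*} [CStarAlgebra A] {a : A}
    (ha : IsSelfAdjoint a) {s : Set ℝ} (hs : spectrum ℝ a ⊆ s) {f : ℝ → ℂ}
    (hf : ContinuousOn f s) {p : ℂ[X]} {ε : ℝ} (hε : 0 ≤ ε)
    (hp : ∀ t ∈ s, ‖p.eval (t : ℂ) - f t‖ ≤ ε) :
    ‖aeval a p - cfc (fun z : ℂ => f z.re) a‖ ≤ ε := by
  have : IsStarNormal a := ha.isStarNormal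
  have hre : ∀ z ∈ spectrum ℂ a, z.re ∈ s ∧ (z.re : ℂ) = z := fun z hz =>
    ⟨hs (ha.spectrumRestricts.apply_mem hz), ha.spectrumRestricts.rightInvOn hz⟩
  have hF : ContinuousOn (fun z : ℂ => f z.re) (spectrum ℂ a) :=
    hf.comp Complex.continuous_re.continuousOn fun z hz => (hre z hz).1
  rw [← cfc_polynomial p a, ← cfc_sub _ _ a p.continuous.continuousOn hF]
  refine norm_cfc_le hε fun z hz => ?_
  simpa [(hre z hz).2] using hp z.re (hre z hz).1

end Polynomial

theorem spectrum.subset_Icc_norm {A : Type*} [CStarAlgebra A] (a : A) :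
    spectrum ℝ a ⊆ Set.Icc (-‖a‖) ‖a‖ := by
  rcases subsingleton_or_nontrivial A with hA | hA
  · simp [spectrum.of_subsingleton]
  · exact fun t ht => abs_le.1 (Real.norm_eq_abs t ▸ spectrum.norm_le_norm_of_mem ht)

namespace IsFaithfulTracialState

variable {A : Type*} [CStarAlgebra A] {τ : A → ℂ}

noncomputable def toLinearMap (hτ : IsFaithfulTracialState A τ) : A →ₗ[ℂ] ℂ where
  toFun := τ
  map_add' := hτ.map_add
  map_smul' := hτ.map_smul

@[simp]
lemma coe_toLinearMap (hτ : IsFaithfulTracialState A τ) : ⇑hτ.toLinearMap = τ := rfl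

lemma norm_apply_le_of_nonneg [PartialOrder A] [StarOrderedRing A]
    (hτ : IsFaithfulTracialState A τ) {a : A} (ha : 0 ≤ a) : ‖τ a‖ ≤ ‖a‖ := by
  open ComplexOrder in
  have hpos : ∀ b : A, 0 ≤ b → 0 ≤ τ b := fun b hb => by
    obtain ⟨s, rfl⟩ := CStarAlgebra.nonneg_iff_eq_star_mul_self.mp hb
    exact Complex.nonneg_iff.2 ⟨hτ.nonneg_re s, (hτ.im_eq_zero s).symm⟩
  calc ‖τ a‖ ≤ ‖τ 1‖ * ‖a‖ :=
        (PositiveLinearMap.mk₀ hτ.toLinearMap hpos).norm_apply_le_of_nonneg a ha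
    _ = ‖a‖ := by simp [hτ.map_one]

lemma norm_apply_le (hτ : IsFaithfulTracialState A τ) (a : A) : ‖τ a‖ ≤ 4 * ‖a‖ := by
  let _ := CStarAlgebra.spectralOrder A
  have := CStarAlgebra.spectralOrderedRing A
  obtain ⟨y, hy_nonneg, hy_norm, hy⟩ := CStarAlgebra.exists_sum_four_nonneg a
  calc ‖τ a‖ = ‖∑ i : Fin 4, Complex.I ^ (i : ℕ) * τ (y i)‖ := by
        rw [← hτ.coe_toLinearMap, hy, map_sum]; simp
    _ ≤ ∑ i, ‖τ (y i)‖ := (norm_sum_le _ _).trans_eq (by simp)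
    _ ≤ ∑ _ : Fin 4, ‖a‖ :=
        Finset.sum_le_sum fun i _ => (hτ.norm_apply_le_of_nonneg (hy_nonneg i)).trans (hy_norm i)
    _ = 4 * ‖a‖ := by simp

lemma dist_apply_le (hτ : IsFaithfulTracialState A τ) (a b : A) :
    dist (τ a) (τ b) ≤ 4 * ‖a - b‖ := by
  rw [dist_eq_norm, ← hτ.coe_toLinearMap, ← map_sub]
  exact hτ.norm_apply_le (a - b)

end IsFaithfulTracialState

/-- One-variable case: if self-adjoint elements `x⁽ⁿ⁾` converge to a self-adjoint `x` in
trace and in norm for every polynomial `p ∈ ℂ[X]`, and `f : ℝ → ℂ` is continuous on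
`I = [−‖x‖ − δ, ‖x‖ + δ]` with `δ > 0`, then eventually the spectrum of `x⁽ⁿ⁾` is contained
in `I` (so `f(x⁽ⁿ⁾)` is defined via the continuous functional calculus, here realized as
`cfc (fun z : ℂ => f z.re)`), and `f(x⁽ⁿ⁾) → f(x)` in norm and in trace. -/
theorem stmt14 {A : ℕ → Type*} [∀ n, CStarAlgebra (A n)] {B : Type*} [CStarAlgebra B]
    (τ' : ∀ n, A n → ℂ) (τ : B → ℂ)
    (hτ' : ∀ n, IsFaithfulTracialState (A n) (τ' n)) (hτ : IsFaithfulTracialState B τ)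
    (x' : ∀ n, A n) (x : B)
    (hsa' : ∀ n, IsSelfAdjoint (x' n)) (hsa : IsSelfAdjoint x)
    (htr : ∀ p : Polynomial ℂ,
      Tendsto (fun n => τ' n (Polynomial.aeval (x' n) p)) atTop
        (𝓝 (τ (Polynomial.aeval x p))))
    (hnorm : ∀ p : Polynomial ℂ,
      Tendsto (fun n => ‖Polynomial.aeval (x' n) p‖) atTop (𝓝 ‖Polynomial.aeval x p‖))
    (δ : ℝ) (hδ : 0 < δ) (f : ℝ → ℂ)
    (hf : ContinuousOn f (Set.Icc (-(‖x‖ + δ)) (‖x‖ + δ))) :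
    (∀ᶠ n in atTop, spectrum ℝ (x' n) ⊆ Set.Icc (-(‖x‖ + δ)) (‖x‖ + δ)) ∧
    Tendsto (fun n => ‖cfc (fun z : ℂ => f z.re) (x' n)‖) atTop
      (𝓝 ‖cfc (fun z : ℂ => f z.re) x‖) ∧
    Tendsto (fun n => τ' n (cfc (fun z : ℂ => f z.re) (x' n))) atTop
      (𝓝 (τ (cfc (fun z : ℂ => f z.re) x))) := by
  set I := Set.Icc (-(‖x‖ + δ)) (‖x‖ + δ)
  have hspec_x' : ∀ᶠ n in atTop, spectrum ℝ (x' n) ⊆ I := by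
    have hx' : Tendsto (fun n => ‖x' n‖) atTop (𝓝 ‖x‖) := by simpa using hnorm Polynomial.X
    filter_upwards [hx'.eventually_le_const (lt_add_of_pos_right ‖x‖ hδ)] with n hn
    exact (spectrum.subset_Icc_norm _).trans (Set.Icc_subset_Icc (neg_le_neg hn) hn)
  have hspec_x : spectrum ℝ x ⊆ I :=
    (spectrum.subset_Icc_norm x).trans (Set.Icc_subset_Icc (by linarith) (by linarith))
  have happrox : ∀ ε > 0, ∃ p : Polynomial ℂ,
      (∀ᶠ n in atTop, ‖Polynomial.aeval (x' n) p - cfc (fun z : ℂ => f z.re) (x' n)‖ ≤ ε) ∧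
      ‖Polynomial.aeval x p - cfc (fun z : ℂ => f z.re) x‖ ≤ ε := by
    intro ε hε
    obtain ⟨p, hp⟩ := exists_complex_polynomial_near_of_continuousOn _ _ f hf ε hε
    have hp' : ∀ t ∈ I, ‖p.eval (t : ℂ) - f t‖ ≤ ε := fun t ht => (hp t ht).le
    exact ⟨p, hspec_x'.mono fun n hn => (hsa' n).norm_aeval_sub_cfc_le hn hf hε.le hp',
      hsa.norm_aeval_sub_cfc_le hspec_x hf hε.le hp'⟩
  refine ⟨hspec_x', tendsto_of_forall_approx fun ε hε => ?_,
    tendsto_of_forall_approx fun ε hε => ?_⟩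
  · obtain ⟨p, hpx', hpx⟩ := happrox ε hε
    exact ⟨_, _, hnorm p, hpx'.mono fun n hn => (dist_norm_norm_le _ _).trans hn,
      (dist_norm_norm_le _ _).trans hpx⟩
  · obtain ⟨p, hpx', hpx⟩ := happrox (ε / 4) (by positivity)
    exact ⟨_, _, htr p, hpx'.mono fun n hn => ((hτ' n).dist_apply_le _ _).trans (by linarith),
      (hτ.dist_apply_le _ _).trans (by linarith)⟩
end
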